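/- arXiv:2311.11833 — 4 statements merged into one kernel-verified Lean document; each statement's English description precedes it below -/
import Mathlib

section
/- Let n be a positive integer, let A be an invertible n×n real matrix, let D be an n×n real matrix, let b be a vector in ℝⁿ, let α be a positive integer, and let ε be a real number with α · |ε| · ‖A⁻¹ * D‖ < 1, where ‖·‖ is the operator norm induced by the Euclidean vector norm. Define the averaged perturbation solution x̂_α := (1/2)((A + (α·ε) • D)⁻¹ b + (A − (α·ε) • D)⁻¹ b). Then x̂_α = Σ_{k=0}^∞ α^{2k} • ((ε • (A⁻¹ * D))^{2k} * A⁻¹) b, where the series converges absolutely in ℝⁿ. -/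
open scoped Matrix.Norms.L2Operator

/-- Matrix-vector product, with the vector living in Euclidean space (so that vector
norms are the Euclidean ones). -/
noncomputable def mulVecE {n : ℕ} (M : Matrix (Fin n) (Fin n) ℝ)
    (v : EuclideanSpace ℝ (Fin n)) : EuclideanSpace ℝ (Fin n) :=
  (WithLp.equiv 2 (Fin n → ℝ)).symm (M.mulVec ((WithLp.equiv 2 (Fin n → ℝ)) v))

open scoped Ring

/-!
With `x = (α ε) • A⁻¹ D` we have `A ± (α ε) • D = A (1 ± x)`. As `1 + x` and `1 - x` commute
with product `1 - x²`, the average of their inverses is `(1 - x²)⁻¹`, and `‖x²‖ ≤ ‖x‖² < 1`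
makes this the Neumann series `∑ (x²)ᵏ = ∑ α^(2k) (ε A⁻¹ D)^(2k)`. The bounded linear map
`M ↦ (M A⁻¹) b` carries the series and its absolute convergence over to `ℝⁿ`.
-/

theorem Ring.inverse_one_add_eq_mul_inverse_one_sub_sq {R : Type*} [Ring R] {x : R}
    (h : IsUnit (1 - x ^ 2)) : (1 + x)⁻¹ʳ = (1 - x) * (1 - x ^ 2)⁻¹ʳ := by
  have hfactor : (1 + x) * (1 - x) = 1 - x ^ 2 := by noncomm_ring
  have hcomm : Commute (1 + x) (1 - x) :=
    (Commute.one_right _).sub_right ((Commute.one_left x).add_left (Commute.refl x))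
  obtain ⟨hplus, hminus⟩ := hcomm.isUnit_mul_iff.mp (hfactor ▸ h)
  rw [← hfactor, Ring.inverse_mul (Or.inl hplus), Ring.mul_inverse_cancel_left _ _ hminus]

theorem Ring.inverse_one_add_add_inverse_one_sub {R : Type*} [Ring R] {x : R}
    (h : IsUnit (1 - x ^ 2)) : (1 + x)⁻¹ʳ + (1 - x)⁻¹ʳ = 2 * (1 - x ^ 2)⁻¹ʳ := by
  have hneg := Ring.inverse_one_add_eq_mul_inverse_one_sub_sq (x := -x) (by rwa [neg_sq])
  rw [← sub_eq_add_neg, sub_neg_eq_add, neg_sq] at hneg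
  rw [Ring.inverse_one_add_eq_mul_inverse_one_sub_sq h, hneg, ← add_mul, sub_add_add_cancel,
    one_add_one_eq_two]

theorem Ring.inverse_one_add_add_inverse_one_sub_eq_two_mul_tsum {R : Type*} [NormedRing R]
    [HasSummableGeomSeries R] {x : R} (hx : ‖x ^ 2‖ < 1) :
    (1 + x)⁻¹ʳ + (1 - x)⁻¹ʳ = 2 * ∑' k, (x ^ 2) ^ k := by
  rw [geom_series_eq_inverse _ hx]
  exact Ring.inverse_one_add_add_inverse_one_sub (Units.oneSub _ hx).isUnit

namespace Matrix

variable {n : Type*} [Fintype n] [DecidableEq n] {K : Type*} [CommRing K]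

theorem inv_add_eq_inverse_one_add_mul {A : Matrix n n K} (hA : IsUnit A) (M : Matrix n n K) :
    (A + M)⁻¹ = (1 + A⁻¹ * M)⁻¹ʳ * A⁻¹ := by
  have hAinv : A * A⁻¹ = 1 := mul_nonsing_inv A ((isUnit_iff_isUnit_det A).mp hA)
  rw [← nonsing_inv_eq_ringInverse, ← mul_inv_rev, Matrix.mul_add, Matrix.mul_one,
    ← Matrix.mul_assoc, hAinv, Matrix.one_mul]

theorem inv_sub_eq_inverse_one_sub_mul {A : Matrix n n K} (hA : IsUnit A) (M : Matrix n n K) :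
    (A - M)⁻¹ = (1 - A⁻¹ * M)⁻¹ʳ * A⁻¹ := by
  rw [sub_eq_add_neg, inv_add_eq_inverse_one_add_mul hA, Matrix.mul_neg, ← sub_eq_add_neg]

end Matrix

section mulVecE

variable {n : ℕ}

theorem add_mulVecE (M N : Matrix (Fin n) (Fin n) ℝ) (v : EuclideanSpace ℝ (Fin n)) :
    mulVecE (M + N) v = mulVecE M v + mulVecE N v := by
  simp [mulVecE, Matrix.add_mulVec]

theorem smul_mulVecE (c : ℝ) (M : Matrix (Fin n) (Fin n) ℝ) (v : EuclideanSpace ℝ (Fin n)) :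
    mulVecE (c • M) v = c • mulVecE M v := by
  simp [mulVecE, Matrix.smul_mulVec]

theorem norm_mulVecE_le (M : Matrix (Fin n) (Fin n) ℝ) (v : EuclideanSpace ℝ (Fin n)) :
    ‖mulVecE M v‖ ≤ ‖M‖ * ‖v‖ :=
  Matrix.l2_opNorm_mulVec M v

theorem HasSum.mulVecE_mul {f : ℕ → Matrix (Fin n) (Fin n) ℝ} {S : Matrix (Fin n) (Fin n) ℝ}
    (hf : HasSum f S) (C : Matrix (Fin n) (Fin n) ℝ) (v : EuclideanSpace ℝ (Fin n)) :
    HasSum (fun k => mulVecE (f k * C) v) (mulVecE (S * C) v) := by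
  let L : Matrix (Fin n) (Fin n) ℝ →ₗ[ℝ] EuclideanSpace ℝ (Fin n) :=
    { toFun := fun M => mulVecE (M * C) v
      map_add' := fun M N => by rw [Matrix.add_mul, add_mulVecE]
      map_smul' := fun c M => by rw [Matrix.smul_mul, smul_mulVecE]; rfl }
  exact hf.map L.toContinuousLinearMap L.toContinuousLinearMap.continuous

theorem Summable.norm_mulVecE_mul {f : ℕ → Matrix (Fin n) (Fin n) ℝ}
    (hf : Summable fun k => ‖f k‖) (C : Matrix (Fin n) (Fin n) ℝ) (v : EuclideanSpace ℝ (Fin n)) :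
    Summable fun k => ‖mulVecE (f k * C) v‖ := by
  refine (hf.mul_right (‖C‖ * ‖v‖)).of_nonneg_of_le (fun _ => norm_nonneg _) fun k => ?_
  calc ‖mulVecE (f k * C) v‖ ≤ ‖f k * C‖ * ‖v‖ := norm_mulVecE_le _ _
    _ ≤ ‖f k‖ * ‖C‖ * ‖v‖ := by gcongr; exact norm_mul_le _ _
    _ = ‖f k‖ * (‖C‖ * ‖v‖) := mul_assoc _ _ _

end mulVecE

theorem averaged_perturbation_solution_series_general (n : ℕ)
    (A D : Matrix (Fin n) (Fin n) ℝ) (hA : IsUnit A) (b : EuclideanSpace ℝ (Fin n))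
    (α : ℕ) (ε : ℝ) (hε : (α : ℝ) * |ε| * ‖A⁻¹ * D‖ < 1) :
    Summable (fun k : ℕ =>
        ‖(α : ℝ) ^ (2 * k) • mulVecE ((ε • (A⁻¹ * D)) ^ (2 * k) * A⁻¹) b‖) ∧
      (1 / 2 : ℝ) • (mulVecE (A + ((α : ℝ) * ε) • D)⁻¹ b
          + mulVecE (A - ((α : ℝ) * ε) • D)⁻¹ b)
        = ∑' k : ℕ, (α : ℝ) ^ (2 * k) • mulVecE ((ε • (A⁻¹ * D)) ^ (2 * k) * A⁻¹) b := by
  set x := ((α : ℝ) * ε) • (A⁻¹ * D) with hx_def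
  have hx : ‖x‖ < 1 := by rwa [norm_smul, Real.norm_eq_abs, abs_mul, Nat.abs_cast]
  have hx2 : ‖x ^ 2‖ < 1 :=
    (norm_pow_le' x two_pos).trans_lt (pow_lt_one₀ (norm_nonneg x) hx two_ne_zero)
  have hterm : ∀ k : ℕ, (α : ℝ) ^ (2 * k) • mulVecE ((ε • (A⁻¹ * D)) ^ (2 * k) * A⁻¹) b
      = mulVecE ((x ^ 2) ^ k * A⁻¹) b := by
    intro k
    rw [← smul_mulVecE, ← smul_mul_assoc, ← pow_mul, hx_def, smul_pow, smul_pow, smul_smul,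
      mul_pow]
  have hinv_sum : (A + ((α : ℝ) * ε) • D)⁻¹ + (A - ((α : ℝ) * ε) • D)⁻¹
      = (2 : ℝ) • ((∑' k, (x ^ 2) ^ k) * A⁻¹) := by
    rw [Matrix.inv_add_eq_inverse_one_add_mul hA, Matrix.inv_sub_eq_inverse_one_sub_mul hA,
      Matrix.mul_smul, ← hx_def, ← add_mul,
      Ring.inverse_one_add_add_inverse_one_sub_eq_two_mul_tsum hx2, two_mul, two_smul, add_mul]
  simp_rw [hterm]
  refine ⟨(summable_norm_geometric_of_norm_lt_one hx2).norm_mulVecE_mul A⁻¹ b, ?_⟩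
  rw [((summable_geometric_of_norm_lt_one hx2).hasSum.mulVecE_mul A⁻¹ b).tsum_eq,
    ← add_mulVecE, hinv_sum, smul_mulVecE, smul_smul]
  norm_num

/-- The averaged perturbation solution
`x̂_α = (1/2)((A + (α ε) • D)⁻¹ b + (A - (α ε) • D)⁻¹ b)` equals the absolutely
convergent series `∑_k α^(2k) • ((ε • (A⁻¹ D))^(2k) A⁻¹) b` in `ℝⁿ`. -/
theorem averaged_perturbation_solution_series (n : ℕ) (hn : 0 < n)
    (A D : Matrix (Fin n) (Fin n) ℝ) (hA : IsUnit A) (b : EuclideanSpace ℝ (Fin n))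
    (α : ℕ) (hα : 0 < α) (ε : ℝ) (hε : (α : ℝ) * |ε| * ‖A⁻¹ * D‖ < 1) :
    Summable (fun k : ℕ =>
        ‖(α : ℝ) ^ (2 * k) • mulVecE ((ε • (A⁻¹ * D)) ^ (2 * k) * A⁻¹) b‖) ∧
      (1 / 2 : ℝ) • (mulVecE (A + ((α : ℝ) * ε) • D)⁻¹ b
          + mulVecE (A - ((α : ℝ) * ε) • D)⁻¹ b)
        = ∑' k : ℕ, (α : ℝ) ^ (2 * k) • mulVecE ((ε • (A⁻¹ * D)) ^ (2 * k) * A⁻¹) b :=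
  averaged_perturbation_solution_series_general n A D hA b α ε hε
end

section
/- (Example 1, m = 2) Let n be a positive integer, let A be an invertible n×n real matrix, let D be an n×n real matrix, and let b ∈ ℝⁿ with ‖b‖ = 1. For real ε and α ∈ {1, 2} define x̂_α(ε) := (1/2)((A + (α·ε) • D)⁻¹ b + (A − (α·ε) • D)⁻¹ b). Then there exist constants C > 0 and ε₀ > 0 such that for every real ε with 0 < |ε| < ε₀, the matrices A ± ε • D and A ± (2ε) • D are invertible and the combination x̂* := (x̂₂(ε) − 4 x̂₁(ε))/(−3) satisfies ‖A⁻¹ b − x̂*‖ ≤ C · ε⁴. -/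
/-!
Write `B = A⁻¹ D` and let `S(t)` be the average of `(A + tD)⁻¹` and `(A - tD)⁻¹`. The resolvent
identity `(A + tD)⁻¹ = A⁻¹ - t B (A + tD)⁻¹`, applied at `t` and `-t`, makes the odd powers of `t`
cancel: `S(t) = A⁻¹ + t² B² S(t)` exactly. Iterating once, `S(t) = A⁻¹ + t² B² A⁻¹ + t⁴ B⁴ S(t)`,
so Richardson extrapolation `(4 S(ε) - S(2ε)) / 3` removes the `t²` term and leaves
`ε⁴ B⁴ (16 S(2ε) - 4 S(ε)) / 3`. For `|t| ‖B‖ ≤ 1/2` the resolvent identity also gives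
`‖(A + tD)⁻¹‖ ≤ 2 ‖A⁻¹‖`, which bounds this remainder by a constant times `ε⁴`.
-/

open scoped Matrix.Norms.L2Operator

/-- The averaged perturbation solution
`x̂_α(ε) = (1/2)((A + (α ε) • D)⁻¹ b + (A - (α ε) • D)⁻¹ b)`. -/
noncomputable def xhat {n : ℕ} (A D : Matrix (Fin n) (Fin n) ℝ)
    (b : EuclideanSpace ℝ (Fin n)) (ε α : ℝ) : EuclideanSpace ℝ (Fin n) :=
  (1 / 2 : ℝ) • (mulVecE (A + (α * ε) • D)⁻¹ b + mulVecE (A - (α * ε) • D)⁻¹ b)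

theorem richardson_sub_eq {V : Type*} [AddCommGroup V] [Module ℝ V] (ε : ℝ)
    (a g f₁ f₂ x₁ x₂ : V) (h₁ : x₁ = a + ε ^ 2 • g + ε ^ 4 • f₁)
    (h₂ : x₂ = a + (2 * ε) ^ 2 • g + (2 * ε) ^ 4 • f₂) :
    a - (-3 : ℝ)⁻¹ • (x₂ - (4 : ℝ) • x₁) = ε ^ 4 • ((16 / 3 : ℝ) • f₂ - (4 / 3 : ℝ) • f₁) := by
  subst h₁ h₂
  module

section Algebra

variable {R : Type*} [Ring R] [Algebra ℝ R] {a : R} (d : R)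

noncomputable def avgInverse (a d : R) (t : ℝ) : R :=
  (1 / 2 : ℝ) • (Ring.inverse (a + t • d) + Ring.inverse (a - t • d))

theorem inverse_add_smul_eq_sub {t : ℝ} (ha : IsUnit a) (hu : IsUnit (a + t • d)) :
    Ring.inverse (a + t • d)
      = Ring.inverse a - t • (Ring.inverse a * d * Ring.inverse (a + t • d)) := by
  set u := Ring.inverse (a + t • d)
  calc u = Ring.inverse a * a * u := by rw [Ring.inverse_mul_cancel _ ha, one_mul]
    _ = Ring.inverse a * (a + t • d) * u - t • (Ring.inverse a * d * u) := by
      rw [mul_add, add_mul, mul_smul_comm, smul_mul_assoc, add_sub_cancel_right]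
    _ = Ring.inverse a - t • (Ring.inverse a * d * u) := by
      rw [mul_assoc, Ring.mul_inverse_cancel _ hu, mul_one]

theorem avgInverse_eq {t : ℝ} (ha : IsUnit a) (hp : IsUnit (a + t • d))
    (hm : IsUnit (a - t • d)) :
    avgInverse a d t = Ring.inverse a + t ^ 2 • ((Ring.inverse a * d) ^ 2 * avgInverse a d t) := by
  set B := Ring.inverse a * d
  have hp' := inverse_add_smul_eq_sub d ha hp
  have hm' := inverse_add_smul_eq_sub d ha (t := -t) (by rwa [neg_smul, ← sub_eq_add_neg])
  rw [neg_smul, ← sub_eq_add_neg, neg_smul, sub_neg_eq_add] at hm'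
  set u := Ring.inverse (a + t • d)
  set w := Ring.inverse (a - t • d)
  have hBu : B * u = B * Ring.inverse a - t • (B * (B * u)) := by
    conv_lhs => rw [hp']
    rw [mul_sub, mul_smul_comm, mul_assoc]
  have hBw : B * w = B * Ring.inverse a + t • (B * (B * w)) := by
    conv_lhs => rw [hm']
    rw [mul_add, mul_smul_comm, mul_assoc]
  simp only [avgInverse, pow_two, mul_assoc, mul_smul_comm, mul_add]
  linear_combination (norm := module) (1 / 2 : ℝ) • (hp' + hm') + (t / 2) • (hBw - hBu)

theorem avgInverse_eq_expansion {t : ℝ} (ha : IsUnit a) (hp : IsUnit (a + t • d))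
    (hm : IsUnit (a - t • d)) :
    avgInverse a d t = Ring.inverse a + t ^ 2 • ((Ring.inverse a * d) ^ 2 * Ring.inverse a)
      + t ^ 4 • ((Ring.inverse a * d) ^ 4 * avgInverse a d t) := by
  have h := avgInverse_eq d ha hp hm
  conv_lhs => rw [h, h]
  rw [mul_add, mul_smul_comm, ← mul_assoc, ← pow_add, smul_add, smul_smul, add_assoc]
  ring_nf

end Algebra

section Normed

variable {R : Type*} [NormedRing R] [NormedAlgebra ℝ R] {a : R} (d : R)

theorem isUnit_add_smul_of_abs_mul_lt_one [HasSummableGeomSeries R] {t : ℝ} (ha : IsUnit a)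
    (ht : |t| * ‖Ring.inverse a * d‖ < 1) : IsUnit (a + t • d) := by
  have hfac : a + t • d = a * (1 - -(t • (Ring.inverse a * d))) := by
    rw [sub_neg_eq_add, mul_add, mul_one, mul_smul_comm, ← mul_assoc,
      Ring.mul_inverse_cancel _ ha, one_mul]
  have hnorm : ‖-(t • (Ring.inverse a * d))‖ < 1 := by
    rwa [norm_neg, norm_smul, Real.norm_eq_abs]
  rw [hfac]
  exact ha.mul (Units.oneSub _ hnorm).isUnit

theorem isUnit_sub_smul_of_abs_mul_lt_one [HasSummableGeomSeries R] {t : ℝ} (ha : IsUnit a)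
    (ht : |t| * ‖Ring.inverse a * d‖ < 1) : IsUnit (a - t • d) := by
  rw [sub_eq_add_neg, ← neg_smul]
  exact isUnit_add_smul_of_abs_mul_lt_one d ha (by rwa [abs_neg])

theorem norm_inverse_add_smul_le {t : ℝ} (ha : IsUnit a) (hu : IsUnit (a + t • d))
    (ht : |t| * ‖Ring.inverse a * d‖ ≤ 1 / 2) :
    ‖Ring.inverse (a + t • d)‖ ≤ 2 * ‖Ring.inverse a‖ := by
  set u := Ring.inverse (a + t • d)
  have hu_le : ‖u‖ ≤ ‖Ring.inverse a‖ + |t| * ‖Ring.inverse a * d‖ * ‖u‖ :=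
    calc ‖u‖ = ‖Ring.inverse a - t • (Ring.inverse a * d * u)‖ := by
          rw [← inverse_add_smul_eq_sub d ha hu]
      _ ≤ ‖Ring.inverse a‖ + |t| * (‖Ring.inverse a * d‖ * ‖u‖) := by
          grw [norm_sub_le, norm_smul, Real.norm_eq_abs, norm_mul_le]
      _ = _ := by ring
  nlinarith [mul_le_mul_of_nonneg_right ht (norm_nonneg u)]

theorem norm_avgInverse_le [HasSummableGeomSeries R] {t : ℝ} (ha : IsUnit a)
    (ht : |t| * ‖Ring.inverse a * d‖ ≤ 1 / 2) :
    ‖avgInverse a d t‖ ≤ 2 * ‖Ring.inverse a‖ := by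
  have ht' : |(-t)| * ‖Ring.inverse a * d‖ ≤ 1 / 2 := by rwa [abs_neg]
  have hp := norm_inverse_add_smul_le d ha
    (isUnit_add_smul_of_abs_mul_lt_one d ha (by linarith)) ht
  have hm := norm_inverse_add_smul_le d ha
    (isUnit_add_smul_of_abs_mul_lt_one d ha (by linarith)) ht'
  rw [neg_smul, ← sub_eq_add_neg] at hm
  calc ‖avgInverse a d t‖
      ≤ 1 / 2 * (‖Ring.inverse (a + t • d)‖ + ‖Ring.inverse (a - t • d)‖) := by
        grw [avgInverse, norm_smul, norm_add_le,
          Real.norm_of_nonneg (by norm_num : (0 : ℝ) ≤ 1 / 2)]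
    _ ≤ 2 * ‖Ring.inverse a‖ := by linarith

theorem norm_inverse_sub_richardson_le [HasSummableGeomSeries R] {ε : ℝ} (ha : IsUnit a)
    (hε : |2 * ε| * ‖Ring.inverse a * d‖ ≤ 1 / 2) :
    ‖Ring.inverse a - (-3 : ℝ)⁻¹ • (avgInverse a d (2 * ε) - (4 : ℝ) • avgInverse a d ε)‖
      ≤ 40 / 3 * ‖Ring.inverse a * d‖ ^ 4 * ‖Ring.inverse a‖ * ε ^ 4 := by
  have hε₁ : |ε| * ‖Ring.inverse a * d‖ ≤ 1 / 2 := by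
    rw [abs_mul, abs_two] at hε
    nlinarith [abs_nonneg ε, norm_nonneg (Ring.inverse a * d)]
  have hexp {t : ℝ} (ht : |t| * ‖Ring.inverse a * d‖ ≤ 1 / 2) :=
    avgInverse_eq_expansion d ha (isUnit_add_smul_of_abs_mul_lt_one d ha (t := t) (by linarith))
      (isUnit_sub_smul_of_abs_mul_lt_one d ha (by linarith))
  rw [richardson_sub_eq ε _ _ _ _ _ _ (hexp hε₁) (hexp hε)]
  set B := Ring.inverse a * d
  have hB4 {t : ℝ} (ht : |t| * ‖B‖ ≤ 1 / 2) :
      ‖B ^ 4 * avgInverse a d t‖ ≤ ‖B‖ ^ 4 * (2 * ‖Ring.inverse a‖) := by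
    grw [norm_mul_le, norm_pow_le' _ (by norm_num), norm_avgInverse_le d ha ht]
  calc _ ≤ ε ^ 4 * (16 / 3 * ‖B ^ 4 * avgInverse a d (2 * ε)‖
          + 4 / 3 * ‖B ^ 4 * avgInverse a d ε‖) := by
        grw [norm_smul, norm_sub_le, norm_smul, norm_smul, Real.norm_of_nonneg (by positivity)]
        norm_num
    _ ≤ ε ^ 4 * (16 / 3 * (‖B‖ ^ 4 * (2 * ‖Ring.inverse a‖))
          + 4 / 3 * (‖B‖ ^ 4 * (2 * ‖Ring.inverse a‖))) := by
      grw [hB4 hε, hB4 hε₁]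
    _ = _ := by ring

end Normed

theorem mulVecE_eq_toEuclideanLin {n : ℕ} (M : Matrix (Fin n) (Fin n) ℝ)
    (v : EuclideanSpace ℝ (Fin n)) : mulVecE M v = M.toEuclideanLin v :=
  rfl

theorem xhat_eq_mulVecE_avgInverse {n : ℕ} (A D : Matrix (Fin n) (Fin n) ℝ)
    (b : EuclideanSpace ℝ (Fin n)) (ε α : ℝ) :
    xhat A D b ε α = mulVecE (avgInverse A D (α * ε)) b := by
  simp only [xhat, avgInverse, mulVecE_eq_toEuclideanLin, Matrix.nonsing_inv_eq_ringInverse,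
    map_smul, map_add, LinearMap.smul_apply, LinearMap.add_apply]

theorem m_two_combination_error_general (n : ℕ)
    (A D : Matrix (Fin n) (Fin n) ℝ) (hA : IsUnit A)
    (b : EuclideanSpace ℝ (Fin n)) :
    ∃ C > (0 : ℝ), ∃ ε₀ > (0 : ℝ), ∀ ε : ℝ, 0 < |ε| → |ε| < ε₀ →
      IsUnit (A + ε • D) ∧ IsUnit (A - ε • D)
        ∧ IsUnit (A + (2 * ε) • D) ∧ IsUnit (A - (2 * ε) • D)
        ∧ ‖mulVecE A⁻¹ b
              - ((-3 : ℝ)⁻¹) • (xhat A D b ε 2 - (4 : ℝ) • xhat A D b ε 1)‖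
            ≤ C * ε ^ 4 := by
  set β := ‖Ring.inverse A * D‖
  refine ⟨40 / 3 * β ^ 4 * ‖Ring.inverse A‖ * ‖b‖ + 1, by positivity, 1 / (4 * β + 1),
    by positivity, fun ε _ hε => ?_⟩
  rw [lt_div_iff₀ (by positivity)] at hε
  have h2ε : |2 * ε| * β ≤ 1 / 2 := by
    rw [abs_mul, abs_two]
    nlinarith [abs_nonneg ε]
  have hε₁ : |ε| * β < 1 := by nlinarith [abs_nonneg ε]
  have h2ε' : |2 * ε| * β < 1 := by linarith
  refine ⟨isUnit_add_smul_of_abs_mul_lt_one D hA hε₁, isUnit_sub_smul_of_abs_mul_lt_one D hA hε₁,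
    isUnit_add_smul_of_abs_mul_lt_one D hA h2ε', isUnit_sub_smul_of_abs_mul_lt_one D hA h2ε', ?_⟩
  have hvec : mulVecE A⁻¹ b - (-3 : ℝ)⁻¹ • (xhat A D b ε 2 - (4 : ℝ) • xhat A D b ε 1)
      = mulVecE (Ring.inverse A
          - (-3 : ℝ)⁻¹ • (avgInverse A D (2 * ε) - (4 : ℝ) • avgInverse A D ε)) b := by
    simp only [xhat_eq_mulVecE_avgInverse, one_mul, mulVecE_eq_toEuclideanLin,
      Matrix.nonsing_inv_eq_ringInverse, map_sub, map_smul, LinearMap.sub_apply,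
      LinearMap.smul_apply]
  rw [hvec]
  calc _ ≤ _ * ‖b‖ := Matrix.l2_opNorm_mulVec _ _
    _ ≤ 40 / 3 * β ^ 4 * ‖Ring.inverse A‖ * ε ^ 4 * ‖b‖ := by
      grw [norm_inverse_sub_richardson_le D hA h2ε]
    _ ≤ _ := by nlinarith [show 0 ≤ ε ^ 4 by positivity]

/-- Example 1 (`m = 2`): there exist `C > 0` and `ε₀ > 0` such that for all `ε` with
`0 < |ε| < ε₀`, the matrices `A ± ε • D` and `A ± (2ε) • D` are invertible and
`x̂* = (x̂₂(ε) - 4 x̂₁(ε))/(-3)` satisfies `‖A⁻¹ b - x̂*‖ ≤ C ε⁴`. -/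
theorem m_two_combination_error (n : ℕ) (hn : 0 < n)
    (A D : Matrix (Fin n) (Fin n) ℝ) (hA : IsUnit A)
    (b : EuclideanSpace ℝ (Fin n)) (hb : ‖b‖ = 1) :
    ∃ C > (0 : ℝ), ∃ ε₀ > (0 : ℝ), ∀ ε : ℝ, 0 < |ε| → |ε| < ε₀ →
      IsUnit (A + ε • D) ∧ IsUnit (A - ε • D)
        ∧ IsUnit (A + (2 * ε) • D) ∧ IsUnit (A - (2 * ε) • D)
        ∧ ‖mulVecE A⁻¹ b
              - ((-3 : ℝ)⁻¹) • (xhat A D b ε 2 - (4 : ℝ) • xhat A D b ε 1)‖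
            ≤ C * ε ^ 4 :=
  m_two_combination_error_general n A D hA b
end

section
/- Let n be a positive integer, let A be an invertible n×n real matrix, let D be an n×n real matrix, let b ∈ ℝⁿ, and let ε be a real number with 3 · |ε| · ‖A⁻¹ * D‖ < 1, where ‖·‖ is the operator norm induced by the Euclidean vector norm. For α ∈ {1, 3} define x̂_α := (1/2)((A + (α·ε) • D)⁻¹ b + (A − (α·ε) • D)⁻¹ b). Then the intermediate correction x̂₃₁ := (x̂₃ − 9 x̂₁)/(−8) has no ε² term: x̂₃₁ = A⁻¹ b + Σ_{k=2}^∞ ((9 − 9^k)/8) • ((ε • (A⁻¹ * D))^{2k} * A⁻¹) b. -/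
open scoped Matrix.Norms.L2Operator

/-!
Write `M = A⁻¹ * D`. Since `A + c • D = A * (1 + c • M)`, the Neumann series gives
`(A + c • D)⁻¹ + (A - c • D)⁻¹ = ((1 + c • M)⁻¹ + (1 - c • M)⁻¹) * A⁻¹
  = 2 ∑ₖ (c • M)^(2k) * A⁻¹`, the odd powers cancelling.
Hence `x̂_α = ∑ₖ α^(2k) gₖ` with `gₖ = ((ε • M)^(2k) * A⁻¹) b`, and
`(x̂₃ - 9 x̂₁)/(-8) = ∑ₖ ((9 - 9^k)/8) gₖ`, whose coefficients are `1` at `k = 0`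
and `0` at `k = 1`.
-/

open scoped Ring

theorem hasSum_inverse_one_add_add_inverse_one_sub {R : Type*} [NormedRing R]
    [HasSummableGeomSeries R] {t : R} (ht : ‖t‖ < 1) :
    HasSum (fun k => 2 * t ^ (2 * k)) ((1 + t)⁻¹ʳ + (1 - t)⁻¹ʳ) := by
  have hneg : HasSum (fun k => (-t) ^ k) (1 + t)⁻¹ʳ := by
    simpa using hasSum_geom_series_inverse (-t) (by rwa [norm_neg])
  have hsum := hneg.add (hasSum_geom_series_inverse t ht)
  rw [← (mul_right_injective₀ two_ne_zero).hasSum_iff] at hsum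
  · simpa [Function.comp_def, pow_mul, two_mul] using hsum
  · intro k hk
    obtain ⟨j, rfl | rfl⟩ := Nat.even_or_odd' k
    · exact absurd ⟨j, rfl⟩ hk
    · rw [Odd.neg_pow ⟨j, rfl⟩, neg_add_cancel]

theorem Matrix.inv_add_smul_add_inv_sub_smul {ι K : Type*} [Fintype ι] [DecidableEq ι]
    [CommRing K] {A : Matrix ι ι K} (hA : IsUnit A) (D : Matrix ι ι K) (c : K) :
    (A + c • D)⁻¹ + (A - c • D)⁻¹
      = ((1 + c • (A⁻¹ * D))⁻¹ + (1 - c • (A⁻¹ * D))⁻¹) * A⁻¹ := by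
  have hfac : ∀ c' : K, A + c' • D = A * (1 + c' • (A⁻¹ * D)) := fun c' => by
    rw [Matrix.mul_add, Matrix.mul_one, Matrix.mul_smul, ← Matrix.mul_assoc,
      Matrix.mul_nonsing_inv A ((Matrix.isUnit_iff_isUnit_det A).mp hA), Matrix.one_mul]
  rw [sub_eq_add_neg, ← neg_smul, hfac, hfac, Matrix.mul_inv_rev, Matrix.mul_inv_rev, neg_smul,
    ← sub_eq_add_neg, add_mul]

noncomputable def mulVecEApplyCLM {n : ℕ} (b : EuclideanSpace ℝ (Fin n)) :
    Matrix (Fin n) (Fin n) ℝ →L[ℝ] EuclideanSpace ℝ (Fin n) :=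
  LinearMap.toContinuousLinearMap (LinearMap.applyₗ b ∘ₗ (Matrix.toEuclideanLin).toLinearMap)

theorem mulVecEApplyCLM_apply {n : ℕ} (b : EuclideanSpace ℝ (Fin n))
    (X : Matrix (Fin n) (Fin n) ℝ) :
    mulVecEApplyCLM b X = mulVecE X b := rfl

theorem hasSum_xhat {n : ℕ} {A : Matrix (Fin n) (Fin n) ℝ} (hA : IsUnit A)
    (D : Matrix (Fin n) (Fin n) ℝ) (b : EuclideanSpace ℝ (Fin n)) {ε α : ℝ}
    (h : ‖(α * ε) • (A⁻¹ * D)‖ < 1) :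
    HasSum (fun k => (α ^ 2) ^ k • mulVecE ((ε • (A⁻¹ * D)) ^ (2 * k) * A⁻¹) b)
      (xhat A D b ε α) := by
  have hmat := (hasSum_inverse_one_add_add_inverse_one_sub h).mul_right A⁻¹
  simp only [← Matrix.nonsing_inv_eq_ringInverse,
    ← Matrix.inv_add_smul_add_inv_sub_smul hA] at hmat
  have hvec := (hmat.mapL (mulVecEApplyCLM b)).const_smul (1 / 2 : ℝ)
  rw [map_add, mulVecEApplyCLM_apply, mulVecEApplyCLM_apply] at hvec
  rw [xhat]
  convert hvec using 2 with k
  have hpow : ((α * ε) • (A⁻¹ * D)) ^ (2 * k) = (α ^ 2) ^ k • (ε • (A⁻¹ * D)) ^ (2 * k) := by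
    rw [mul_smul, smul_pow, pow_mul]
  rw [hpow, mul_assoc, smul_mul_assoc, two_mul ((α ^ 2) ^ k • _), map_add, map_smul,
    ← two_smul ℝ, smul_smul, mulVecEApplyCLM_apply]
  norm_num

theorem intermediate_correction_three_one_general (n : ℕ)
    (A D : Matrix (Fin n) (Fin n) ℝ) (hA : IsUnit A) (b : EuclideanSpace ℝ (Fin n))
    (ε : ℝ) (hε : 3 * |ε| * ‖A⁻¹ * D‖ < 1) :
    ((-8 : ℝ)⁻¹) • (xhat A D b ε 3 - (9 : ℝ) • xhat A D b ε 1)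
        = mulVecE A⁻¹ b
            + ∑' k : ℕ, (((9 : ℝ) - 9 ^ (k + 2)) / 8) •
                mulVecE ((ε • (A⁻¹ * D)) ^ (2 * (k + 2)) * A⁻¹) b := by
  set g : ℕ → EuclideanSpace ℝ (Fin n) :=
    fun k => mulVecE ((ε • (A⁻¹ * D)) ^ (2 * k) * A⁻¹) b
  have hnorm (α : ℝ) : ‖(α * ε) • (A⁻¹ * D)‖ = |α| * |ε| * ‖A⁻¹ * D‖ := by
    rw [norm_smul, Real.norm_eq_abs, abs_mul]
  have h1 := hasSum_xhat hA D b (α := 1) (by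
    rw [hnorm, abs_one]; linarith [mul_nonneg (abs_nonneg ε) (norm_nonneg (A⁻¹ * D))])
  have h3 := hasSum_xhat hA D b (α := 3) (by rwa [hnorm, abs_of_pos three_pos])
  have hcomb : HasSum (fun k => ((9 - 9 ^ k) / 8 : ℝ) • g k)
      ((-8 : ℝ)⁻¹ • (xhat A D b ε 3 - (9 : ℝ) • xhat A D b ε 1)) := by
    convert (h3.sub (h1.const_smul (9 : ℝ))).const_smul (-8 : ℝ)⁻¹ using 1
    funext k
    norm_num
    module
  rw [((hasSum_nat_add_iff' 2).mpr hcomb).tsum_eq]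
  norm_num [Finset.sum_range_succ, g]

/-- The intermediate correction `x̂₃₁ = (x̂₃ - 9 x̂₁)/(-8)` has no `ε²` term:
`x̂₃₁ = A⁻¹ b + ∑_{k ≥ 2} ((9 - 9^k)/8) • ((ε • (A⁻¹ D))^(2k) A⁻¹) b`. -/
theorem intermediate_correction_three_one (n : ℕ) (hn : 0 < n)
    (A D : Matrix (Fin n) (Fin n) ℝ) (hA : IsUnit A) (b : EuclideanSpace ℝ (Fin n))
    (ε : ℝ) (hε : 3 * |ε| * ‖A⁻¹ * D‖ < 1) :
    ((-8 : ℝ)⁻¹) • (xhat A D b ε 3 - (9 : ℝ) • xhat A D b ε 1)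
        = mulVecE A⁻¹ b
            + ∑' k : ℕ, (((9 : ℝ) - 9 ^ (k + 2)) / 8) •
                mulVecE ((ε • (A⁻¹ * D)) ^ (2 * (k + 2)) * A⁻¹) b :=
  intermediate_correction_three_one_general n A D hA b ε hε
end

section
/- (Example 2, m = 3) Let n be a positive integer, let A be an invertible n×n real matrix, let D be an n×n real matrix, and let b ∈ ℝⁿ with ‖b‖ = 1. For real ε and α ∈ {1, 2, 3} define x̂_α(ε) := (1/2)((A + (α·ε) • D)⁻¹ b + (A − (α·ε) • D)⁻¹ b). Then there exist constants C > 0 and ε₀ > 0 such that for every real ε with 0 < |ε| < ε₀, all the matrices A ± (α·ε) • D (α = 1, 2, 3) are invertible and the combination x̂* := (3/2) x̂₁(ε) − (3/5) x̂₂(ε) + (1/10) x̂₃(ε), whose coefficients are the unique solution β of Γ₃ᵀ β = (1,0,0)ᵀ with Γ₃ the 3×3 matrix with entries (Γ₃)_{α,j} = α^{2j}, satisfies ‖A⁻¹ b − x̂*‖ ≤ C · ε⁶. -/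
/-! Near `t = 0`, `(A + t • D)⁻¹` agrees with the Neumann partial sum
`∑_{i<N} (-t)ⁱ (A⁻¹ D)ⁱ A⁻¹` up to `O(tᴺ)`. Hence a weighted sum `∑_k c_k (A + σ_k ε • D)⁻¹`
equals `∑_{i<N} εⁱ (∑_k c_k σ_kⁱ) (-A⁻¹ D)ⁱ A⁻¹ + O(εᴺ)`, which is `A⁻¹ + O(εᴺ)` as soon as the
moments satisfy `∑_k c_k σ_kⁱ = δ_{i0}` for `i < N`. Averaging over the nodes `±α ε` kills the odd
moments, and the even ones are the entries of `Γ_mᵀ β = e₁`; for `m = 3` this gives `O(ε⁶)`. -/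

open Matrix
open scoped Matrix.Norms.L2Operator

open Filter Asymptotics Topology Finset

theorem sum_smul_sum_pow_smul_eq_of_moments {𝕜 M ι : Type*} [CommRing 𝕜] [AddCommGroup M]
    [Module 𝕜 M] [Fintype ι] (c σ : ι → 𝕜) {N : ℕ} (hN : 0 < N)
    (hmom : ∀ i < N, ∑ k, c k * σ k ^ i = if i = 0 then 1 else 0) (ε : 𝕜) (f : ℕ → M) :
    ∑ k, c k • ∑ i ∈ range N, (σ k * ε) ^ i • f i = f 0 := by
  calc ∑ k, c k • ∑ i ∈ range N, (σ k * ε) ^ i • f i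
      = ∑ i ∈ range N, (ε ^ i * ∑ k, c k * σ k ^ i) • f i := by
        simp only [smul_sum, smul_smul, sum_smul, Finset.mul_sum]
        rw [sum_comm]
        refine sum_congr rfl fun i _ => sum_congr rfl fun k _ => ?_
        ring_nf
    _ = ∑ i ∈ range N, if i = 0 then f 0 else 0 := by
        refine sum_congr rfl fun i hi => ?_
        rw [hmom i (mem_range.1 hi)]
        split_ifs with h <;> simp [h]
    _ = f 0 := by simp [hN]

section InverseExpansion

variable {R : Type*} [NormedRing R] [NormedAlgebra ℝ R] [HasSummableGeomSeries R]

theorem eventually_isUnit_add_smul {x : R} (hx : IsUnit x) (d : R) (a : ℝ) :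
    ∀ᶠ ε : ℝ in 𝓝 0, IsUnit (x + (a * ε) • d) := by
  have hc : Continuous fun ε : ℝ => x + (a * ε) • d := by fun_prop
  exact (hc.tendsto' 0 x (by simp)).eventually (Units.isOpen.mem_nhds hx)

theorem isBigO_inverse_add_smul_sub_neumann (x : Rˣ) (d : R) (a : ℝ) (N : ℕ) :
    (fun ε : ℝ => Ring.inverse (↑x + (a * ε) • d)
        - ∑ i ∈ range N, (a * ε) ^ i • ((-↑x⁻¹ * d) ^ i * ↑x⁻¹)) =O[𝓝 0] fun ε => ε ^ N := by
  have ht : Tendsto (fun ε : ℝ => (a * ε) • d) (𝓝 0) (𝓝 0) := by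
    have hc : Continuous fun ε : ℝ => (a * ε) • d := by fun_prop
    simpa using hc.tendsto 0
  refine (((NormedRing.inverse_add_norm_diff_nth_order x N).comp_tendsto ht).congr_left
    fun ε => ?_).trans ?_
  · simp only [Function.comp_apply, sum_mul, mul_smul_comm, smul_pow, smul_mul_assoc]
  · refine isBigO_of_le' (c := (‖a‖ * ‖d‖) ^ N) _ fun ε => le_of_eq ?_
    simp only [Function.comp_apply, norm_pow, norm_norm, norm_smul, norm_mul]
    ring

theorem isBigO_sum_smul_inverse_add_smul_sub_inverse {ι : Type*} [Fintype ι] (c σ : ι → ℝ)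
    (x : Rˣ) (d : R) {N : ℕ} (hN : 0 < N)
    (hmom : ∀ i < N, ∑ k, c k * σ k ^ i = if i = 0 then 1 else 0) :
    (fun ε : ℝ => ∑ k, c k • Ring.inverse (↑x + (σ k * ε) • d) - Ring.inverse (x : R))
      =O[𝓝 0] fun ε => ε ^ N := by
  refine (IsBigO.fun_sum (s := univ) fun k _ =>
    (isBigO_inverse_add_smul_sub_neumann x d (σ k) N).const_smul_left (c k)).congr_left fun ε => ?_
  simp only [Pi.smul_apply, smul_sub, sum_sub_distrib,
    sum_smul_sum_pow_smul_eq_of_moments c σ hN hmom, Ring.inverse_unit, pow_zero, one_mul]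

theorem isBigO_sum_smul_average_inverse_sub_inverse {m : ℕ} [NeZero m] (w σ : Fin m → ℝ)
    (x : Rˣ) (d : R)
    (hΓ : (Matrix.of fun k j : Fin m => σ k ^ (2 * (j : ℕ)))ᵀ *ᵥ w = Pi.single 0 1) :
    (fun ε : ℝ => ∑ k, w k • ((1 / 2 : ℝ) • (Ring.inverse (↑x + (σ k * ε) • d)
        + Ring.inverse (↑x - (σ k * ε) • d))) - Ring.inverse (x : R))
      =O[𝓝 0] fun ε => ε ^ (2 * m) := by
  have hmom : ∀ i < 2 * m,
      ∑ kb : Fin m × Bool, w kb.1 / 2 * (if kb.2 then σ kb.1 else -σ kb.1) ^ i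
        = if i = 0 then 1 else 0 := by
    intro i hi
    simp only [Fintype.sum_prod_type, Fintype.sum_bool, Bool.false_eq_true, ↓reduceIte]
    rcases Nat.even_or_odd i with ⟨j, rfl⟩ | hodd
    · have := congrFun hΓ ⟨j, by omega⟩
      simp only [mulVec, dotProduct, transpose_apply, of_apply, Pi.single_apply, Fin.ext_iff,
        Fin.val_zero] at this
      calc ∑ k, (w k / 2 * σ k ^ (j + j) + w k / 2 * (-σ k) ^ (j + j))
          = ∑ k, σ k ^ (2 * j) * w k :=
            sum_congr rfl fun k _ => by rw [Even.neg_pow ⟨j, rfl⟩, ← two_mul]; ring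
        _ = if j + j = 0 then 1 else 0 := by simp only [this, Nat.add_eq_zero_iff, and_self]
    · simp only [hodd.neg_pow, mul_neg, add_neg_cancel, sum_const_zero, if_neg hodd.pos.ne']
  refine (isBigO_sum_smul_inverse_add_smul_sub_inverse _ _ x d
    (Nat.mul_pos two_pos (NeZero.pos m)) hmom).congr_left fun ε => ?_
  simp only [Fintype.sum_prod_type, Fintype.sum_bool, Bool.false_eq_true, ↓reduceIte, neg_mul,
    neg_smul, ← sub_eq_add_neg, smul_add, smul_smul, sum_add_distrib, div_eq_mul_inv, one_mul]

end InverseExpansion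

theorem mulVecE_eq_toEuclideanCLM {n : ℕ} (M : Matrix (Fin n) (Fin n) ℝ)
    (v : EuclideanSpace ℝ (Fin n)) : mulVecE M v = toEuclideanCLM (𝕜 := ℝ) M v :=
  rfl

theorem isBigO_mulVecE_left {α : Type*} {l : Filter α} {n : ℕ}
    (F : α → Matrix (Fin n) (Fin n) ℝ) (v : EuclideanSpace ℝ (Fin n)) :
    (fun a => mulVecE (F a) v) =O[l] F :=
  isBigO_of_le' (c := ‖v‖) _ fun a => ((F a).l2_opNorm_mulVec v).trans_eq (mul_comm _ _)

theorem m_three_combination_error_general (n : ℕ)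
    (A D : Matrix (Fin n) (Fin n) ℝ) (hA : IsUnit A)
    (b : EuclideanSpace ℝ (Fin n)) :
    (Matrix.of fun α j : Fin 3 => (((α : ℕ) + 1 : ℝ)) ^ (2 * (j : ℕ)))ᵀ.mulVec
        ![3 / 2, -3 / 5, 1 / 10] = ![1, 0, 0] ∧
      ∃ C > (0 : ℝ), ∃ ε₀ > (0 : ℝ), ∀ ε : ℝ, 0 < |ε| → |ε| < ε₀ →
        (∀ α : Fin 3, IsUnit (A + ((((α : ℕ) + 1 : ℝ)) * ε) • D)
            ∧ IsUnit (A - ((((α : ℕ) + 1 : ℝ)) * ε) • D)) ∧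
        ‖mulVecE A⁻¹ b
            - ((3 / 2 : ℝ) • xhat A D b ε 1 - (3 / 5 : ℝ) • xhat A D b ε 2
                + (1 / 10 : ℝ) • xhat A D b ε 3)‖
          ≤ C * ε ^ 6 := by
  have hΓ : (Matrix.of fun α j : Fin 3 => (((α : ℕ) + 1 : ℝ)) ^ (2 * (j : ℕ)))ᵀ.mulVec
      ![3 / 2, -3 / 5, 1 / 10] = ![1, 0, 0] := by
    ext j; fin_cases j <;> norm_num [mulVec, dotProduct, Fin.sum_univ_three, cons_val_two]
  refine ⟨hΓ, ?_⟩
  have hO := isBigO_sum_smul_average_inverse_sub_inverse ![3 / 2, -3 / 5, 1 / 10]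
    (fun α : Fin 3 => ((α : ℕ) + 1 : ℝ)) hA.unit D (hΓ.trans (by ext j; fin_cases j <;> rfl))
  have hvec : (fun ε : ℝ => mulVecE A⁻¹ b
      - ((3 / 2 : ℝ) • xhat A D b ε 1 - (3 / 5 : ℝ) • xhat A D b ε 2
        + (1 / 10 : ℝ) • xhat A D b ε 3)) =O[𝓝 0] fun ε => ε ^ 6 := by
    refine ((isBigO_mulVecE_left _ b).trans hO).neg_left.congr_left fun ε => ?_
    simp only [xhat, mulVecE_eq_toEuclideanCLM, nonsing_inv_eq_ringInverse, Fin.sum_univ_three,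
      IsUnit.unit_spec, map_add, map_sub, map_smul, _root_.add_apply, _root_.sub_apply,
      _root_.smul_apply, cons_val_zero, cons_val_one, cons_val_two, head_cons, tail_cons]
    norm_num
    module
  obtain ⟨C, hC, hCO⟩ := hvec.exists_pos
  have hunit : ∀ᶠ ε : ℝ in 𝓝 0, ∀ α : Fin 3, IsUnit (A + ((((α : ℕ) + 1 : ℝ)) * ε) • D)
      ∧ IsUnit (A - ((((α : ℕ) + 1 : ℝ)) * ε) • D) := by
    refine eventually_all.2 fun α => (eventually_isUnit_add_smul hA D _).and ?_
    simpa only [neg_mul, neg_smul, ← sub_eq_add_neg] using eventually_isUnit_add_smul hA D (-_)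
  obtain ⟨ε₀, hε₀, h⟩ := Metric.eventually_nhds_iff.1 (hCO.bound.and hunit)
  refine ⟨C, hC, ε₀, hε₀, fun ε _ hε => ?_⟩
  obtain ⟨hbound, hunits⟩ := h (by simpa using hε)
  rw [norm_pow, Real.norm_eq_abs, Even.pow_abs ⟨3, rfl⟩] at hbound
  exact ⟨hunits, hbound⟩

/-- Example 2 (`m = 3`): the coefficients `(3/2, -3/5, 1/10)` solve `Γ₃ᵀ β = e₁`, and
there exist `C > 0`, `ε₀ > 0` such that for all `ε` with `0 < |ε| < ε₀` the matrices
`A ± (α ε) • D` (`α = 1, 2, 3`) are invertible and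
`x̂* = (3/2) x̂₁(ε) - (3/5) x̂₂(ε) + (1/10) x̂₃(ε)` satisfies `‖A⁻¹ b - x̂*‖ ≤ C ε⁶`. -/
theorem m_three_combination_error (n : ℕ) (hn : 0 < n)
    (A D : Matrix (Fin n) (Fin n) ℝ) (hA : IsUnit A)
    (b : EuclideanSpace ℝ (Fin n)) (hb : ‖b‖ = 1) :
    (Matrix.of fun α j : Fin 3 => (((α : ℕ) + 1 : ℝ)) ^ (2 * (j : ℕ)))ᵀ.mulVec
        ![3 / 2, -3 / 5, 1 / 10] = ![1, 0, 0] ∧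
      ∃ C > (0 : ℝ), ∃ ε₀ > (0 : ℝ), ∀ ε : ℝ, 0 < |ε| → |ε| < ε₀ →
        (∀ α : Fin 3, IsUnit (A + ((((α : ℕ) + 1 : ℝ)) * ε) • D)
            ∧ IsUnit (A - ((((α : ℕ) + 1 : ℝ)) * ε) • D)) ∧
        ‖mulVecE A⁻¹ b
            - ((3 / 2 : ℝ) • xhat A D b ε 1 - (3 / 5 : ℝ) • xhat A D b ε 2
                + (1 / 10 : ℝ) • xhat A D b ε 3)‖
          ≤ C * ε ^ 6 :=
  m_three_combination_error_general n A D hA b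
end
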